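/- With the lifting setup below, the Eisenbud operators are independent of the choice of lifting up to homotopy: if d̃_n, d̃'_n : C̃_n → C̃_{n−1} are two families of Q-linear maps on the same free Q-modules C̃_n, both reducing modulo (f_1,…,f_c) to the differentials of C, with d̃_{n−1}∘d̃_n = Σ_k f_k·t̃_{k,n} and d̃'_{n−1}∘d̃'_n = Σ_k f_k·t̃'_{k,n}, then for each k the reduced families t_{k} and t'_{k} are homotopic: there exist R-linear maps λ_n : C_n → C_{n−1} with t_{k,n} − t'_{k,n} = d_{n−1}∘λ_n + λ_{n−1}∘d_n for all n. -/

import Mathlib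

/-!
Let `I = (f₁, …, f_c)`. Both lifts reduce to the same differential and `C̃_n` is free, so
`d̃' - d̃ = Σ f_j σ_j` for Q-linear maps `σ_j`. Expanding
`d̃'d̃' - d̃d̃ = d̃'(d̃' - d̃) + (d̃' - d̃)d̃` gives the relation
`Σ f_j (t̃'_j - t̃_j - d̃'σ_j - σ_j d̃) = 0`. Since `f` is regular on the free modules `C̃_n`,
the first Koszul homology vanishes: every coefficient of such a relation lies in `I C̃`.
Hence `t'_k - t_k = d σ_k + σ_k d` modulo `I`, and `λ = -σ_k ⊗ R` is the homotopy.
-/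

open TensorProduct

/-- The quotient ring `R = Q/(f₁,…,f_c)`. -/
abbrev Rquot (Q : Type) [CommRing Q] {c : ℕ} (f : Fin c → Q) : Type :=
  Q ⧸ Ideal.span (Set.range f)

open RingTheory.Sequence

section Regular

variable {Q M : Type*} [CommRing Q] [AddCommGroup M] [Module Q M]

theorem Ideal.ofList_ofFn {c : ℕ} (f : Fin c → Q) :
    Ideal.ofList (List.ofFn f) = Ideal.span (Set.range f) := by
  simp only [Ideal.ofList, List.mem_ofFn']
  rfl

theorem Submodule.mem_span_range_smul_top_iff {c : ℕ} (f : Fin c → Q) (m : M) :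
    m ∈ Ideal.span (Set.range f) • (⊤ : Submodule Q M) ↔ ∃ a : Fin c → M, m = ∑ j, f j • a j := by
  constructor
  · intro hm
    refine Submodule.smul_induction_on hm (fun r hr n _ => ?_) ?_
    · obtain ⟨g, rfl⟩ := (Ideal.mem_span_range_iff_exists_fun).mp hr
      exact ⟨fun j => g j • n, by simp only [Finset.sum_smul, smul_smul, mul_comm]⟩
    · rintro _ _ ⟨a, rfl⟩ ⟨b, rfl⟩
      exact ⟨a + b, by simp only [Pi.add_apply, smul_add, Finset.sum_add_distrib]⟩
  · rintro ⟨a, rfl⟩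
    exact Submodule.sum_mem _ fun j _ =>
      Submodule.smul_mem_smul (Ideal.subset_span ⟨j, rfl⟩) Submodule.mem_top

theorem RingTheory.Sequence.IsWeaklyRegular.of_flat_module [Module.Flat Q M] {rs : List Q}
    (h : IsWeaklyRegular Q rs) : IsWeaklyRegular M rs :=
  (TensorProduct.lid Q M).isWeaklyRegular_congr rs |>.mp h.isWeaklyRegular_rTensor

theorem RingTheory.Sequence.IsWeaklyRegular.mem_smul_top_of_sum_smul_eq_zero {c : ℕ}
    {f : Fin c → Q} (hreg : IsWeaklyRegular M (List.ofFn f)) {a : Fin c → M}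
    (hsum : ∑ j, f j • a j = 0) (k : Fin c) :
    a k ∈ Ideal.span (Set.range f) • (⊤ : Submodule Q M) := by
  induction c with
  | zero => exact k.elim0
  | succ c ih =>
    rw [List.ofFn_succ', List.concat_eq_append, isWeaklyRegular_append_iff,
      isWeaklyRegular_singleton_iff, Ideal.ofList_ofFn] at hreg
    obtain ⟨hinit, hr⟩ := hreg
    rw [Fin.sum_univ_castSucc] at hsum
    set r := f (Fin.last c)
    set J := Ideal.span (Set.range fun i : Fin c => f i.castSucc)
    have hJ : J ≤ Ideal.span (Set.range f) := Ideal.span_mono (Set.range_comp_subset_range _ f)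
    have hlast : a (Fin.last c) ∈ J • (⊤ : Submodule Q M) := by
      refine mem_of_isSMulRegular_quotient_of_smul_mem hr ?_
      rw [Submodule.mem_span_range_smul_top_iff]
      exact ⟨fun i => -a i.castSucc, by
        simp only [smul_neg, Finset.sum_neg_distrib, eq_neg_of_add_eq_zero_right hsum]⟩
    obtain ⟨b, hb⟩ := (Submodule.mem_span_range_smul_top_iff _ _).mp hlast
    -- `r • a (last c) = ∑ f i • r • b i` is absorbed into the first `c` coefficients.
    have hinit_mem := ih hinit (a := fun i => a i.castSucc + r • b i) (by
      rw [hb, Finset.smul_sum] at hsum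
      simpa only [smul_add, Finset.sum_add_distrib, smul_comm r] using hsum)
    induction k using Fin.lastCases with
    | last => exact Submodule.smul_mono_left hJ hlast
    | cast i =>
      have hrb : r • b i ∈ Ideal.span (Set.range f) • (⊤ : Submodule Q M) :=
        Submodule.smul_mem_smul (Ideal.subset_span ⟨_, rfl⟩) Submodule.mem_top
      simpa using Submodule.sub_mem _ (Submodule.smul_mono_left hJ (hinit_mem i)) hrb

end Regular

section BaseChange

variable {Q M N : Type*} [CommRing Q] [AddCommGroup M] [Module Q M] [AddCommGroup N] [Module Q N]

theorem LinearMap.baseChange_quotient_eq_zero_iff (I : Ideal Q) (h : M →ₗ[Q] N) :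
    h.baseChange (Q ⧸ I) = 0 ↔ ∀ x, h x ∈ I • (⊤ : Submodule Q N) := by
  have one_tmul_eq_zero : ∀ x, (1 : Q ⧸ I) ⊗ₜ[Q] h x = 0 ↔ h x ∈ I • (⊤ : Submodule Q N) := by
    intro x
    rw [← (quotTensorEquivQuotSMul N I).map_eq_zero_iff, quotTensorEquivQuotSMul_mk_one_tmul,
      Submodule.Quotient.mk_eq_zero]
  refine ⟨fun h0 x => ?_, fun hx => ?_⟩
  · rw [← one_tmul_eq_zero, ← baseChange_tmul, h0, zero_apply]
  · refine TensorProduct.AlgebraTensorModule.ext fun r x => ?_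
    rw [baseChange_tmul, zero_apply, ← mul_one r, ← smul_eq_mul, ← smul_tmul',
      (one_tmul_eq_zero x).mpr (hx x), smul_zero]

theorem LinearMap.exists_eq_sum_smul_of_baseChange_eq_zero [Module.Free Q M] {c : ℕ}
    {f : Fin c → Q} (h : M →ₗ[Q] N) (hh : h.baseChange (Q ⧸ Ideal.span (Set.range f)) = 0) :
    ∃ σ : Fin c → M →ₗ[Q] N, ∀ x, h x = ∑ j, f j • σ j x := by
  let b := Module.Free.chooseBasis Q M
  choose a ha using fun i => (Submodule.mem_span_range_smul_top_iff f (h (b i))).mp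
    ((baseChange_quotient_eq_zero_iff _ h).mp hh (b i))
  refine ⟨fun j => b.constr ℕ fun i => a i j, fun x => ?_⟩
  suffices h = ∑ j, f j • b.constr ℕ fun i => a i j by
    simpa only [sum_apply, smul_apply] using congr($this x)
  refine b.ext fun i => ?_
  simp only [sum_apply, smul_apply, Module.Basis.constr_basis, ha i]

theorem LinearMap.baseChange_eq_zero_of_sum_smul_eq_zero {c : ℕ} {f : Fin c → Q}
    (hreg : IsWeaklyRegular N (List.ofFn f)) (φ : Fin c → M →ₗ[Q] N)
    (hφ : ∀ x, ∑ j, f j • φ j x = 0) (k : Fin c) :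
    (φ k).baseChange (Q ⧸ Ideal.span (Set.range f)) = 0 :=
  (baseChange_quotient_eq_zero_iff _ _).mpr fun x =>
    hreg.mem_smul_top_of_sum_smul_eq_zero (hφ x) k

end BaseChange

theorem eisenbud_operators_independent_of_lift_general
    (Q : Type) [CommRing Q] (c : ℕ) (f : Fin c → Q)
    (hreg : RingTheory.Sequence.IsRegular Q (List.ofFn f))
    (Ct : ℤ → Type) [∀ n, AddCommGroup (Ct n)] [∀ n, Module Q (Ct n)]
    (hfree : ∀ n, Module.Free Q (Ct n))
    (dt dt' : ∀ n : ℤ, Ct (n + 1) →ₗ[Q] Ct n)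
    (hsame : ∀ n : ℤ,
      (dt n).baseChange (Rquot Q f) = (dt' n).baseChange (Rquot Q f))
    (tt tt' : Fin c → ∀ n : ℤ, Ct (n + 1 + 1) →ₗ[Q] Ct n)
    (hdd : ∀ (n : ℤ) (x : Ct (n + 1 + 1)),
      dt n (dt (n + 1) x) = ∑ k, f k • tt k n x)
    (hdd' : ∀ (n : ℤ) (x : Ct (n + 1 + 1)),
      dt' n (dt' (n + 1) x) = ∑ k, f k • tt' k n x) :
    ∀ k : Fin c,
      ∃ lam : ∀ n : ℤ, (Rquot Q f ⊗[Q] Ct (n + 1)) →ₗ[Rquot Q f] (Rquot Q f ⊗[Q] Ct n),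
        ∀ (n : ℤ) (x : Rquot Q f ⊗[Q] Ct (n + 1 + 1)),
          (tt k n).baseChange (Rquot Q f) x - (tt' k n).baseChange (Rquot Q f) x =
            (dt n).baseChange (Rquot Q f) (lam (n + 1) x) +
              lam n ((dt (n + 1)).baseChange (Rquot Q f) x) := by
  intro k
  have hCreg (n : ℤ) : IsWeaklyRegular (Ct n) (List.ofFn f) :=
    hreg.toIsWeaklyRegular.of_flat_module
  choose σ hσ using fun n => (dt' n - dt n).exists_eq_sum_smul_of_baseChange_eq_zero (f := f)
    (by rw [LinearMap.baseChange_sub]; exact sub_eq_zero_of_eq (hsame n).symm)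
  have hrel (n : ℤ) (x : Ct (n + 1 + 1)) :
      ∑ j, f j • (tt' j n - tt j n - (dt' n ∘ₗ σ (n + 1) j + σ n j ∘ₗ dt (n + 1))) x = 0 := by
    simp only [LinearMap.sub_apply, LinearMap.add_apply, LinearMap.comp_apply, smul_sub, smul_add,
      Finset.sum_sub_distrib, Finset.sum_add_distrib]
    simp_rw [← map_smul (dt' n), ← map_sum (dt' n), ← hσ, ← hdd, ← hdd', LinearMap.sub_apply,
      map_sub]
    abel
  refine ⟨fun n => -(σ n k).baseChange _, fun n x => ?_⟩
  have hk := congr($(LinearMap.baseChange_eq_zero_of_sum_smul_eq_zero (hCreg n) _ (hrel n) k) x)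
  simp only [LinearMap.baseChange_sub, LinearMap.baseChange_add, LinearMap.baseChange_comp,
    ← hsame, LinearMap.sub_apply, LinearMap.add_apply, LinearMap.comp_apply,
    LinearMap.zero_apply] at hk
  simp only [LinearMap.neg_apply, map_neg]
  rw [← neg_sub, sub_eq_zero.mp hk, neg_add]

/-- Eisenbud operators attached to two lifts of the same differentials
are homotopic. -/
theorem eisenbud_operators_independent_of_lift
    (Q : Type) [CommRing Q] (c : ℕ) (f : Fin c → Q)
    (hreg : RingTheory.Sequence.IsRegular Q (List.ofFn f))
    (Ct : ℤ → Type) [∀ n, AddCommGroup (Ct n)] [∀ n, Module Q (Ct n)]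
    (hfree : ∀ n, Module.Free Q (Ct n)) (hfin : ∀ n, Module.Finite Q (Ct n))
    (dt dt' : ∀ n : ℤ, Ct (n + 1) →ₗ[Q] Ct n)
    (hsame : ∀ n : ℤ,
      (dt n).baseChange (Rquot Q f) = (dt' n).baseChange (Rquot Q f))
    (tt tt' : Fin c → ∀ n : ℤ, Ct (n + 1 + 1) →ₗ[Q] Ct n)
    (hdd : ∀ (n : ℤ) (x : Ct (n + 1 + 1)),
      dt n (dt (n + 1) x) = ∑ k, f k • tt k n x)
    (hdd' : ∀ (n : ℤ) (x : Ct (n + 1 + 1)),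
      dt' n (dt' (n + 1) x) = ∑ k, f k • tt' k n x) :
    ∀ k : Fin c,
      ∃ lam : ∀ n : ℤ, (Rquot Q f ⊗[Q] Ct (n + 1)) →ₗ[Rquot Q f] (Rquot Q f ⊗[Q] Ct n),
        ∀ (n : ℤ) (x : Rquot Q f ⊗[Q] Ct (n + 1 + 1)),
          (tt k n).baseChange (Rquot Q f) x - (tt' k n).baseChange (Rquot Q f) x =
            (dt n).baseChange (Rquot Q f) (lam (n + 1) x) +
              lam n ((dt (n + 1)).baseChange (Rquot Q f) x) :=
  eisenbud_operators_independent_of_lift_general Q c f hreg Ct hfree dt dt' hsame tt tt' hdd hdd'
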